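/- arXiv:1511.05362 — 3 statements merged into one kernel-verified Lean document; each statement's English description precedes it below -/
import Mathlib

section
/- Let B ∈ R^{n×n}. Then σ_min(B) ≥ min_{1≤k≤n} (1/2)(√(4|b_{kk}|² + (r_k(B) - c_k(B))²) - (r_k(B) + c_k(B))), where r_k(B) = Σ_{j≠k} |b_{kj}| and c_k(B) = Σ_{j≠k} |b_{jk}|. -/
/-!
Let `σ = σ_min(B)`, attained at a unit vector `v`, and `u = B v / σ`; since `σ²` is the least
eigenvalue of `BᵀB`, also `Bᵀ u = σ v`. If `b_kk² > (σ + r_k)(σ + c_k)` for every `k`, the `k`-th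
rows of these two equations give, by the triangle and Cauchy–Schwarz inequalities,
`(σ + c_k) v_k² ≤ σ u_k² + ∑_{j ≠ k} |b_kj| v_j²` and `(σ + r_k) u_k² ≤ σ v_k² + ∑_{j ≠ k} |b_jk| u_j²`,
strictly where `v_k ≠ 0`. Summed over `k` the two sides coincide, a contradiction. Hence
`b_kk² ≤ (σ + r_k)(σ + c_k)` for some `k`, and solving this quadratic inequality for `σ` bounds
the `k`-th term of the minimum by `σ`.
-/

open Matrix Finset

theorem mul_lt_of_mul_lt_of_mul_le {p q b x y : ℝ} (hpq : p * q < b) (hp : 0 ≤ p) (hx : 0 < x)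
    (h : b * x ≤ p * y) : q * x < y :=
  lt_of_mul_lt_mul_left (by nlinarith) hp

theorem mul_le_of_mul_lt_of_mul_le {p q b x y : ℝ} (hpq : p * q < b) (hp : 0 ≤ p) (hx : 0 ≤ x)
    (hy : 0 ≤ y) (h : b * x ≤ p * y) : q * x ≤ y := by
  rcases hx.eq_or_lt with rfl | hx
  · simpa using hy
  · exact (mul_lt_of_mul_lt_of_mul_le hpq hp hx h).le

theorem half_mul_sqrt_sub_le_of_sq_le_mul {b r c s : ℝ} (hr : 0 ≤ s + r) (hc : 0 ≤ s + c)
    (h : b ^ 2 ≤ (s + r) * (s + c)) :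
    1 / 2 * (√(4 * b ^ 2 + (r - c) ^ 2) - (r + c)) ≤ s := by
  have : √(4 * b ^ 2 + (r - c) ^ 2) ≤ 2 * s + r + c :=
    Real.sqrt_le_iff.mpr ⟨by linarith, by nlinarith⟩
  linarith

theorem add_sq_le_add_mul_add_of_sq_le_mul {a b f g f' g' : ℝ} (hf : 0 ≤ f) (hf' : 0 ≤ f')
    (hg : 0 ≤ g) (hg' : 0 ≤ g') (ha : a ^ 2 ≤ f * g) (hb : b ^ 2 ≤ f' * g') :
    (a + b) ^ 2 ≤ (f + f') * (g + g') := by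
  simpa [Fin.sum_univ_two] using sum_sq_le_sum_mul_sum_of_sq_le_mul univ (r := ![a, b])
    (f := ![f, f']) (g := ![g, g']) (by simp [Fin.forall_fin_two, hf, hf'])
    (by simp [Fin.forall_fin_two, hg, hg']) (by simp [Fin.forall_fin_two, ha, hb])

theorem ContinuousLinearMap.exists_norm_eq_one_forall_norm_mul_le
    {E F : Type*} [NormedAddCommGroup E] [NormedSpace ℝ E] [FiniteDimensional ℝ E] [Nontrivial E]
    [SeminormedAddCommGroup F] [NormedSpace ℝ F] (L : E →L[ℝ] F) :
    ∃ x₀ : E, ‖x₀‖ = 1 ∧ ∀ x, ‖L x₀‖ * ‖x‖ ≤ ‖L x‖ := by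
  obtain ⟨x₀, hx₀, hmin⟩ := (isCompact_sphere (0 : E) 1).exists_isMinOn
    (NormedSpace.sphere_nonempty.mpr zero_le_one) (L.continuous.norm.continuousOn)
  rw [mem_sphere_zero_iff_norm] at hx₀
  refine ⟨x₀, hx₀, fun x => ?_⟩
  rcases eq_or_ne x 0 with rfl | hx
  · simp
  have hxn : 0 < ‖x‖ := norm_pos_iff.mpr hx
  have h : ‖L x₀‖ ≤ ‖L (‖x‖⁻¹ • x)‖ := hmin (show ‖x‖⁻¹ • x ∈ Metric.sphere (0 : E) 1 by
    rw [mem_sphere_zero_iff_norm, norm_smul, norm_inv, norm_norm, inv_mul_cancel₀ hxn.ne'])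
  rwa [map_smul, norm_smul, norm_inv, norm_norm, le_inv_mul_iff₀ hxn, mul_comm] at h

theorem ContinuousLinearMap.adjoint_apply_eq_of_forall_norm_mul_le
    {E F : Type*} [NormedAddCommGroup E] [InnerProductSpace ℝ E] [CompleteSpace E]
    [NormedAddCommGroup F] [InnerProductSpace ℝ F] [CompleteSpace F]
    (L : E →L[ℝ] F) {x₀ : E} (hx₀ : ‖x₀‖ = 1) (hmin : ∀ x, ‖L x₀‖ * ‖x‖ ≤ ‖L x‖) :
    adjoint L (L x₀) = ‖L x₀‖ ^ 2 • x₀ := by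
  set T := adjoint L ∘L L
  have hT : IsSelfAdjoint T := by
    rw [ContinuousLinearMap.isSelfAdjoint_iff', ContinuousLinearMap.adjoint_comp,
      ContinuousLinearMap.adjoint_adjoint]
  have hre : ∀ x, T.reApplyInnerSelf x = ‖L x‖ ^ 2 := fun x => by
    rw [ContinuousLinearMap.reApplyInnerSelf_apply, ContinuousLinearMap.comp_apply,
      ContinuousLinearMap.adjoint_inner_left, real_inner_self_eq_norm_sq]
    rfl
  have hextr : IsMinOn T.reApplyInnerSelf (Metric.sphere 0 ‖x₀‖) x₀ := fun x hx => by
    rw [hx₀, mem_sphere_zero_iff_norm] at hx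
    simpa [hre, hx] using pow_le_pow_left₀ (by positivity) (hmin x) 2
  obtain ⟨hmem, -⟩ := hT.hasEigenvector_of_isMinOn (norm_ne_zero_iff.mp (by simp [hx₀])) hextr
  set μ := ⨅ x : { x : E // x ≠ 0 }, T.rayleighQuotient x
  have hTx₀ : T x₀ = μ • x₀ := Module.End.mem_eigenspace_iff.mp hmem
  have hμ : μ = ‖L x₀‖ ^ 2 := by
    rw [← hre, ContinuousLinearMap.reApplyInnerSelf_apply, hTx₀, real_inner_smul_left,
      real_inner_self_eq_norm_sq, hx₀]
    simp
  rw [← hμ, ← hTx₀]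
  rfl

namespace Matrix

variable {ι : Type*} [Fintype ι] [DecidableEq ι]

theorem exists_smallest_singular_value [Nonempty ι] (B : Matrix ι ι ℝ) :
    ∃ s : ℝ, 0 ≤ s ∧ ∃ v u : ι → ℝ, v ≠ 0 ∧ B *ᵥ v = s • u ∧ Bᵀ *ᵥ u = s • v ∧
      ∀ x : EuclideanSpace ℝ ι, s * ‖x‖ ≤ ‖toEuclideanLin B x‖ := by
  set L := toEuclideanCLM (𝕜 := ℝ) B
  obtain ⟨x₀, hx₀, hmin⟩ := L.exists_norm_eq_one_forall_norm_mul_le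
  have hadj : Bᵀ *ᵥ (B *ᵥ x₀.ofLp) = ‖L x₀‖ ^ 2 • x₀.ofLp := by
    have h := L.adjoint_apply_eq_of_forall_norm_mul_le hx₀ hmin
    rw [← ContinuousLinearMap.star_eq_adjoint, ← map_star, star_eq_conjTranspose,
      conjTranspose_eq_transpose_of_trivial] at h
    exact congrArg WithLp.ofLp h
  -- if `‖L x₀‖ = 0` then `B *ᵥ x₀ = 0`, so the junk inverse is harmless
  refine ⟨‖L x₀‖, norm_nonneg _, x₀.ofLp, ‖L x₀‖⁻¹ • B *ᵥ x₀.ofLp, ?_, ?_, ?_, hmin⟩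
  · rw [Ne, WithLp.ofLp_eq_zero, ← norm_eq_zero, hx₀]
    exact one_ne_zero
  · rcases eq_or_ne ‖L x₀‖ 0 with hs | hs
    · rw [hs, zero_smul]
      exact congrArg WithLp.ofLp (norm_eq_zero.mp hs)
    · rw [smul_inv_smul₀ hs]
  · rw [mulVec_smul, hadj, smul_smul]
    congr 1
    field_simp

/-- `r_k(B)`; the column sum `c_k(B)` is `offDiagAbsRowSum Bᵀ k`. -/
def offDiagAbsRowSum (B : Matrix ι ι ℝ) (k : ι) : ℝ := ∑ j ∈ univ.erase k, |B k j|

theorem offDiagAbsRowSum_nonneg (B : Matrix ι ι ℝ) (k : ι) : 0 ≤ offDiagAbsRowSum B k :=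
  sum_nonneg fun _ _ => abs_nonneg _

theorem sum_sum_erase_abs_mul_sq (B : Matrix ι ι ℝ) (v : ι → ℝ) :
    ∑ k, ∑ j ∈ univ.erase k, |B k j| * v j ^ 2 = ∑ j, offDiagAbsRowSum Bᵀ j * v j ^ 2 := by
  rw [sum_comm' (t' := univ) (s' := fun j => univ.erase j)
    (fun k j => by simp only [mem_erase, mem_univ, and_true, ne_comm, true_and])]
  simp only [offDiagAbsRowSum, transpose_apply, sum_mul]

theorem sq_diag_mul_sq_le (B : Matrix ι ι ℝ) {s : ℝ} (hs : 0 ≤ s) {v u : ι → ℝ} (k : ι)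
    (h : (B *ᵥ v) k = s * u k) :
    B k k ^ 2 * v k ^ 2 ≤
      (s + offDiagAbsRowSum B k) * (s * u k ^ 2 + ∑ j ∈ univ.erase k, |B k j| * v j ^ 2) := by
  set P := ∑ j ∈ univ.erase k, |B k j| * |v j|
  have htri : |B k k| * |v k| ≤ s * |u k| + P := by
    have hsplit : B k k * v k = s * u k - ∑ j ∈ univ.erase k, B k j * v j := by
      rw [← h, mulVec, dotProduct, ← add_sum_erase _ _ (mem_univ k)]
      ring
    calc |B k k| * |v k| = |s * u k - ∑ j ∈ univ.erase k, B k j * v j| := by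
          rw [← abs_mul, hsplit]
      _ ≤ |s * u k| + ∑ j ∈ univ.erase k, |B k j * v j| :=
          (abs_sub _ _).trans (add_le_add_right (abs_sum_le_sum_abs _ _) _)
      _ = s * |u k| + P := by simp only [abs_mul, abs_of_nonneg hs, P]
  have hCS : P ^ 2 ≤ offDiagAbsRowSum B k * ∑ j ∈ univ.erase k, |B k j| * v j ^ 2 :=
    sum_sq_le_sum_mul_sum_of_sq_le_mul _ (fun _ _ => abs_nonneg _)
      (fun _ _ => by positivity) (fun j _ => by rw [mul_pow, sq_abs (v j), sq, mul_assoc])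
  have hCS₂ : (s * |u k| + P) ^ 2 ≤ (s + offDiagAbsRowSum B k) *
      (s * u k ^ 2 + ∑ j ∈ univ.erase k, |B k j| * v j ^ 2) :=
    add_sq_le_add_mul_add_of_sq_le_mul hs (offDiagAbsRowSum_nonneg B k) (by positivity)
      (sum_nonneg fun _ _ => by positivity) (le_of_eq (by rw [mul_pow, sq_abs]; ring)) hCS
  calc B k k ^ 2 * v k ^ 2 = (|B k k| * |v k|) ^ 2 := by rw [mul_pow, sq_abs, sq_abs]
    _ ≤ (s * |u k| + P) ^ 2 := pow_le_pow_left₀ (by positivity) htri 2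
    _ ≤ _ := hCS₂

theorem exists_sq_diag_le_of_mulVec_eq (B : Matrix ι ι ℝ) {s : ℝ} (hs : 0 ≤ s) {v u : ι → ℝ}
    (hv : v ≠ 0) (h₁ : B *ᵥ v = s • u) (h₂ : Bᵀ *ᵥ u = s • v) :
    ∃ k, B k k ^ 2 ≤ (s + offDiagAbsRowSum B k) * (s + offDiagAbsRowSum Bᵀ k) := by
  by_contra! hlt
  have hrow_lt : ∀ k, v k ≠ 0 → (s + offDiagAbsRowSum Bᵀ k) * v k ^ 2 <
      s * u k ^ 2 + ∑ j ∈ univ.erase k, |B k j| * v j ^ 2 := fun k hk =>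
    mul_lt_of_mul_lt_of_mul_le (hlt k) (add_nonneg hs (offDiagAbsRowSum_nonneg B k))
      (by positivity) (sq_diag_mul_sq_le B hs k (congrFun h₁ k))
  have hrow : ∀ k, (s + offDiagAbsRowSum Bᵀ k) * v k ^ 2 ≤
      s * u k ^ 2 + ∑ j ∈ univ.erase k, |B k j| * v j ^ 2 := fun k =>
    mul_le_of_mul_lt_of_mul_le (hlt k) (add_nonneg hs (offDiagAbsRowSum_nonneg B k))
      (by positivity) (by positivity) (sq_diag_mul_sq_le B hs k (congrFun h₁ k))
  have hcol : ∀ k, (s + offDiagAbsRowSum B k) * u k ^ 2 ≤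
      s * v k ^ 2 + ∑ j ∈ univ.erase k, |Bᵀ k j| * u j ^ 2 := fun k =>
    mul_le_of_mul_lt_of_mul_le ((mul_comm _ _).trans_lt (hlt k))
      (add_nonneg hs (offDiagAbsRowSum_nonneg Bᵀ k)) (by positivity) (by positivity)
      (sq_diag_mul_sq_le Bᵀ hs k (congrFun h₂ k))
  obtain ⟨k₀, hk₀⟩ := Function.ne_iff.mp hv
  have hsum := sum_lt_sum (fun k _ => add_le_add (hrow k) (hcol k))
    ⟨k₀, mem_univ k₀, add_lt_add_of_lt_of_le (hrow_lt k₀ hk₀) (hcol k₀)⟩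
  simp only [sum_add_distrib, add_mul, sum_sum_erase_abs_mul_sq, transpose_transpose,
    ← mul_sum] at hsum
  linarith

end Matrix

/-- Hong–Pan lower bound: for a square real matrix `B`,
`σ_min(B) ≥ min_k (1/2)(√(4|b_kk|² + (r_k - c_k)²) - (r_k + c_k))`,
where `r_k` and `c_k` are the off-diagonal absolute row and column sums.
`σ_min(B) ≥ m` is expressed as `∀ x, m ‖x‖ ≤ ‖B x‖`. -/
theorem hong_pan_min_singular_value_bound {n : ℕ}
    (B : Matrix (Fin n) (Fin n) ℝ) :
    ∀ x : EuclideanSpace ℝ (Fin n),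
      (⨅ t : Fin n, (1 / 2 : ℝ) *
          (Real.sqrt (4 * |B t t| ^ 2 +
              ((∑ j ∈ Finset.univ.erase t, |B t j|) - ∑ j ∈ Finset.univ.erase t, |B j t|) ^ 2) -
            ((∑ j ∈ Finset.univ.erase t, |B t j|) + ∑ j ∈ Finset.univ.erase t, |B j t|))) * ‖x‖
        ≤ ‖Matrix.toEuclideanLin B x‖ := by
  intro x
  rcases isEmpty_or_nonempty (Fin n) with _ | _
  · simp [Real.iInf_of_isEmpty]
  obtain ⟨s, hs, v, u, hv, h₁, h₂, hσ⟩ := B.exists_smallest_singular_value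
  obtain ⟨k, hk⟩ := B.exists_sq_diag_le_of_mulVec_eq hs hv h₁ h₂
  calc _ ≤ s * ‖x‖ := by
        gcongr
        refine (ciInf_le (Finite.bddBelow_range _) k).trans ?_
        exact half_mul_sqrt_sub_le_of_sq_le_mul (add_nonneg hs (B.offDiagAbsRowSum_nonneg k))
          (add_nonneg hs (Bᵀ.offDiagAbsRowSum_nonneg k)) (by rwa [sq_abs])
    _ ≤ _ := hσ x
end

section
/- Suppose A ∈ R^{n×p} has full column rank and admits an (m, α, β) row paving T, i.e., a partition T = {τ_1, ..., τ_m} of the row indices such that α ≤ λ_min(A_{τ_i} A_{τ_i}ᵀ) and λ_max(A_{τ_i} A_{τ_i}ᵀ) ≤ β for each block. For the randomized block Kaczmarz iteration x_j = x_{j-1} + A_τ†(b_τ - A_τ x_{j-1}) with block τ chosen uniformly at random from T at each step, with x_* the least-squares minimizer of ‖Ax - b‖₂² and e = Ax_* - b, the expected error after j steps satisfies E[‖x_j - x_*‖₂²] ≤ (1 - σ_min²(A)/(βm))^j ‖x_0 - x_*‖₂² + (β/α)·‖e‖₂²/σ_min²(A). -/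
open Matrix

namespace BlockKaczmarzAux

variable {ι κ : Type*} [Fintype ι] [Fintype κ]

lemma nsq_eq_dot (v : ι → ℝ) : ∑ i, v i ^ 2 = v ⬝ᵥ v := by
  simp [dotProduct, sq]

lemma dot_self_nonneg (v : ι → ℝ) : 0 ≤ v ⬝ᵥ v :=
  Finset.sum_nonneg fun i _ => mul_self_nonneg _

lemma cs (v w : ι → ℝ) : (v ⬝ᵥ w) ^ 2 ≤ (v ⬝ᵥ v) * (w ⬝ᵥ w) := by
  simp only [dotProduct]
  calc (∑ i, v i * w i) ^ 2 ≤ (∑ i, v i ^ 2) * ∑ i, w i ^ 2 :=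
        Finset.sum_mul_sq_le_sq_mul_sq _ _ _
    _ = (∑ i, v i * v i) * ∑ i, w i * w i := by simp [pow_two]

lemma proj_dot (Q : Matrix ι ι ℝ) (hsym : Qᵀ = Q) (hidem : Q * Q = Q) (e : ι → ℝ) :
    (Q *ᵥ e) ⬝ᵥ (Q *ᵥ e) = (Q *ᵥ e) ⬝ᵥ e := by
  calc (Q *ᵥ e) ⬝ᵥ (Q *ᵥ e) = ((Q *ᵥ e) ᵥ* Q) ⬝ᵥ e := dotProduct_mulVec _ _ _
    _ = (Qᵀ *ᵥ (Q *ᵥ e)) ⬝ᵥ e := by rw [mulVec_transpose]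
    _ = ((Qᵀ * Q) *ᵥ e) ⬝ᵥ e := by rw [mulVec_mulVec]
    _ = (Q *ᵥ e) ⬝ᵥ e := by rw [hsym, hidem]

lemma proj_contract (Q : Matrix ι ι ℝ) (hsym : Qᵀ = Q) (hidem : Q * Q = Q) (e : ι → ℝ) :
    (Q *ᵥ e) ⬝ᵥ (Q *ᵥ e) ≤ e ⬝ᵥ e := by
  have key := proj_dot Q hsym hidem e
  have h2 := cs (Q *ᵥ e) e
  have h0 := dot_self_nonneg (Q *ᵥ e)
  have h1 := dot_self_nonneg e
  nlinarith [h2, key, h0, h1]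

lemma mulVec_bound_of_transpose (M : Matrix ι κ ℝ) (β : ℝ) (hβ : 0 ≤ β)
    (h : ∀ y : ι → ℝ, (Mᵀ *ᵥ y) ⬝ᵥ (Mᵀ *ᵥ y) ≤ β * (y ⬝ᵥ y)) (z : κ → ℝ) :
    (M *ᵥ z) ⬝ᵥ (M *ᵥ z) ≤ β * (z ⬝ᵥ z) := by
  set w := M *ᵥ z with hw
  have key : w ⬝ᵥ w = (Mᵀ *ᵥ w) ⬝ᵥ z := by
    nth_rewrite 2 [hw]
    rw [dotProduct_mulVec, ← mulVec_transpose]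
  have h2 := cs (Mᵀ *ᵥ w) z
  have h3 := h w
  have h0 := dot_self_nonneg w
  have h1 := dot_self_nonneg z
  have h5 : (w ⬝ᵥ w) ^ 2 ≤ β * (w ⬝ᵥ w) * (z ⬝ᵥ z) := by
    calc (w ⬝ᵥ w) ^ 2 = ((Mᵀ *ᵥ w) ⬝ᵥ z) ^ 2 := by rw [key]
      _ ≤ ((Mᵀ *ᵥ w) ⬝ᵥ (Mᵀ *ᵥ w)) * (z ⬝ᵥ z) := h2
      _ ≤ (β * (w ⬝ᵥ w)) * (z ⬝ᵥ z) := mul_le_mul_of_nonneg_right h3 h1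
  rcases eq_or_lt_of_le h0 with hz | hz
  · rw [← hz]; exact mul_nonneg hβ h1
  · exact le_of_mul_le_mul_right (by nlinarith [h5]) hz

lemma pinv_bound (B : Matrix ι κ ℝ) (D : Matrix κ ι ℝ)
    (h1 : B * D * B = B) (h2 : D * B * D = D) (h3 : (B * D)ᵀ = B * D)
    (h4 : (D * B)ᵀ = D * B)
    (α : ℝ) (hα : 0 < α)
    (hlow : ∀ y : ι → ℝ, α * (y ⬝ᵥ y) ≤ (Bᵀ *ᵥ y) ⬝ᵥ (Bᵀ *ᵥ y)) (e : ι → ℝ) :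
    (D *ᵥ e) ⬝ᵥ (D *ᵥ e) ≤ (e ⬝ᵥ e) / α := by
  set u := D *ᵥ e with hu
  set y := Dᵀ *ᵥ u with hy
  have huBy : u = Bᵀ *ᵥ y := by
    rw [hy, mulVec_mulVec, ← transpose_mul, h4, hu, mulVec_mulVec, h2]
  have hαy : α * (y ⬝ᵥ y) ≤ u ⬝ᵥ u := by
    have := hlow y
    rw [← huBy] at this
    exact this
  have key : u ⬝ᵥ u = (B *ᵥ u) ⬝ᵥ y := by
    nth_rewrite 2 [huBy]
    rw [dotProduct_mulVec, ← mulVec_transpose, transpose_transpose]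
  have hQidem : B * D * (B * D) = B * D := by
    rw [Matrix.mul_assoc B D (B * D), ← Matrix.mul_assoc D B D, h2]
  have hBu : B *ᵥ u = (B * D) *ᵥ e := by rw [hu, mulVec_mulVec]
  have hQe : (B *ᵥ u) ⬝ᵥ (B *ᵥ u) ≤ e ⬝ᵥ e := by
    rw [hBu]; exact proj_contract (B * D) h3 hQidem e
  have hyy := dot_self_nonneg y
  have h0 := dot_self_nonneg u
  have h1' := dot_self_nonneg e
  have hA : (u ⬝ᵥ u) ^ 2 ≤ (e ⬝ᵥ e) * (y ⬝ᵥ y) := by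
    rw [key]
    exact (cs (B *ᵥ u) y).trans (mul_le_mul_of_nonneg_right hQe hyy)
  rw [le_div_iff₀ hα]
  rcases eq_or_lt_of_le h0 with hz | hz
  · rw [← hz]; simpa using h1'
  · refine le_of_mul_le_mul_right ?_ hz
    nlinarith [mul_le_mul_of_nonneg_left hA hα.le, mul_le_mul_of_nonneg_left hαy h1']

lemma sub_dot_of_ortho (a c : κ → ℝ) (h : a ⬝ᵥ c = 0) :
    (a - c) ⬝ᵥ (a - c) = a ⬝ᵥ a + c ⬝ᵥ c := by
  have h' : c ⬝ᵥ a = 0 := by rw [dotProduct_comm]; exact h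
  rw [sub_dotProduct, dotProduct_sub, dotProduct_sub, h, h']
  ring

lemma step_pythagoras (B : Matrix ι κ ℝ) (D : Matrix κ ι ℝ)
    (h2 : D * B * D = D) (h4 : (D * B)ᵀ = D * B) (d : κ → ℝ) (e : ι → ℝ) :
    (d - (D * B) *ᵥ d - D *ᵥ e) ⬝ᵥ (d - (D * B) *ᵥ d - D *ᵥ e)
      = (d - (D * B) *ᵥ d) ⬝ᵥ (d - (D * B) *ᵥ d) + (D *ᵥ e) ⬝ᵥ (D *ᵥ e) := by
  have hDP : Dᵀ * (D * B) = Dᵀ := by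
    rw [← h4, ← transpose_mul, h2]
  have hcross : (d - (D * B) *ᵥ d) ⬝ᵥ (D *ᵥ e) = 0 := by
    rw [dotProduct_mulVec, ← mulVec_transpose, mulVec_sub, mulVec_mulVec, hDP, sub_self,
      zero_dotProduct]
  exact sub_dot_of_ortho _ _ hcross

lemma proj_decrease (P : Matrix κ κ ℝ) (hsym : Pᵀ = P) (hidem : P * P = P) (d : κ → ℝ) :
    (d - P *ᵥ d) ⬝ᵥ (d - P *ᵥ d) = d ⬝ᵥ d - (P *ᵥ d) ⬝ᵥ (P *ᵥ d) := by
  have h1 : (P *ᵥ d) ⬝ᵥ (P *ᵥ d) = (P *ᵥ d) ⬝ᵥ d := proj_dot P hsym hidem d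
  have h2' : d ⬝ᵥ (P *ᵥ d) = (P *ᵥ d) ⬝ᵥ d := dotProduct_comm _ _
  rw [sub_dotProduct, dotProduct_sub, dotProduct_sub, h1, h2']
  ring

noncomputable def ind {ι : Type*} [DecidableEq ι] (z : ι) : ι → ℝ :=
  fun i => if i = z then 1 else 0

lemma sum_ind_sq {ι : Type*} [Fintype ι] [DecidableEq ι] (z : ι) :
    ∑ i, (ind z) i ^ 2 = 1 := by
  simp [ind, apply_ite (fun t : ℝ => t ^ 2), Finset.sum_ite_eq']

lemma sum_snoc {m K : ℕ} (F : (Fin (K + 1) → Fin m) → ℝ) :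
    ∑ ω : Fin (K + 1) → Fin m, F ω
      = ∑ ω' : Fin K → Fin m, ∑ i : Fin m, F (Fin.snoc ω' i) := by
  rw [← Equiv.sum_comp (Fin.snocEquiv (fun _ => Fin m)) F, Fintype.sum_prod_type,
    Finset.sum_comm]
  rfl

end BlockKaczmarzAux

open BlockKaczmarzAux

/-- `Ad` is the Moore–Penrose pseudoinverse of `A` (the four Penrose conditions). -/
def IsMoorePenrose {m p : Type*} [Fintype m] [Fintype p] [DecidableEq m] [DecidableEq p]
    (A : Matrix m p ℝ) (Ad : Matrix p m ℝ) : Prop :=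
  A * Ad * A = A ∧ Ad * A * Ad = Ad ∧ (A * Ad)ᵀ = A * Ad ∧ (Ad * A)ᵀ = Ad * A

/-- randomized block Kaczmarz convergence. `A` has full column rank
(`σ ≤ σ_min(A)`, `σ > 0`) and admits an `(m, α, β)` row paving `T = {τ_1, ..., τ_m}`
(`α ‖y‖² ≤ ‖A_τᵀ y‖² ≤ β ‖y‖²` for every block). The iterate after `J` steps along a
block sequence `ω` is `x J ω`, with `x 0 = x₀` and
`x (J+1) ω = x J ω' + A_{τ}† (b_τ - A_τ (x J ω'))` for the block `τ = τ_{ω (last)}`.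
With `x_*` the least-squares minimizer and `e = A x_* - b`, the expectation over the
uniformly random block sequence satisfies
`E‖x_J - x_*‖² ≤ (1 - σ_min²(A)/(βm))^J ‖x₀ - x_*‖² + (β/α) ‖e‖²/σ_min²(A)`. -/
theorem block_kaczmarz_expected_error {n p m : ℕ}
    (A : Matrix (Fin n) (Fin p) ℝ) (b : Fin n → ℝ)
    (τ : Fin m → Finset (Fin n))
    (hdisj : ∀ i j, i ≠ j → Disjoint (τ i) (τ j))
    (hcover : ∀ r : Fin n, ∃ i, r ∈ τ i)
    (Ad : ∀ i, Matrix (Fin p) (τ i) ℝ)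
    (hAd : ∀ i, IsMoorePenrose (A.submatrix (fun r : τ i => (r : Fin n)) id) (Ad i))
    (α β : ℝ) (hα : 0 < α)
    (hpav_lower : ∀ i, ∀ y : τ i → ℝ,
      α * ∑ r, y r ^ 2 ≤
        ∑ j, ((A.submatrix (fun r : τ i => (r : Fin n)) id)ᵀ.mulVec y) j ^ 2)
    (hpav_upper : ∀ i, ∀ y : τ i → ℝ,
      ∑ j, ((A.submatrix (fun r : τ i => (r : Fin n)) id)ᵀ.mulVec y) j ^ 2 ≤
        β * ∑ r, y r ^ 2)
    (σ : ℝ) (hσpos : 0 < σ)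
    (hσ : ∀ u : Fin p → ℝ, σ ^ 2 * ∑ j, u j ^ 2 ≤ ∑ r, (A.mulVec u) r ^ 2)
    (xstar : Fin p → ℝ)
    (hstar : ∀ z : Fin p → ℝ,
      ∑ r, (A.mulVec xstar r - b r) ^ 2 ≤ ∑ r, (A.mulVec z r - b r) ^ 2)
    (x0 : Fin p → ℝ)
    (x : ∀ J : ℕ, (Fin J → Fin m) → Fin p → ℝ)
    (hx0 : ∀ ω : Fin 0 → Fin m, x 0 ω = x0)
    (hstep : ∀ (J : ℕ) (ω : Fin (J + 1) → Fin m),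
      x (J + 1) ω = x J (ω ∘ Fin.castSucc) +
        (Ad (ω (Fin.last J))).mulVec (fun r =>
          b (r : Fin n) - A.mulVec (x J (ω ∘ Fin.castSucc)) (r : Fin n))) :
    ∀ J : ℕ,
      ((1 : ℝ) / (m : ℝ) ^ J) * ∑ ω : Fin J → Fin m, ∑ t, (x J ω t - xstar t) ^ 2 ≤
        (1 - σ ^ 2 / (β * m)) ^ J * (∑ t, (x0 t - xstar t) ^ 2) +
          (β / α) * (∑ r, (A.mulVec xstar r - b r) ^ 2) / σ ^ 2 := by
  classical
  intro J
  have hβα : ∀ i0 : Fin m, (τ i0).Nonempty → α ≤ β := by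
    intro i0 hne
    obtain ⟨r, hr⟩ := hne
    have h1 := hpav_lower i0 (ind (⟨r, hr⟩ : (τ i0)))
    have h2 := hpav_upper i0 (ind (⟨r, hr⟩ : (τ i0)))
    rw [sum_ind_sq, mul_one] at h1 h2
    linarith
  rcases Nat.eq_zero_or_pos p with hp | hp
  · subst hp
    have hL : (∑ ω : Fin J → Fin m, ∑ t : Fin 0, (x J ω t - xstar t) ^ 2) = 0 := by simp
    rw [hL, mul_zero]
    have hR : (∑ t : Fin 0, (x0 t - xstar t) ^ 2) = 0 := by simp
    rw [hR, mul_zero, zero_add]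
    rcases Nat.eq_zero_or_pos n with hn | hn
    · subst hn
      simp
    · obtain ⟨i1, hi1⟩ := hcover ⟨0, hn⟩
      have hβpos : 0 < β := lt_of_lt_of_le hα (hβα i1 ⟨_, hi1⟩)
      have hEnn : (0:ℝ) ≤ ∑ r, (A.mulVec xstar r - b r) ^ 2 :=
        Finset.sum_nonneg fun _ _ => sq_nonneg _
      exact div_nonneg (mul_nonneg (div_nonneg hβpos.le hα.le) hEnn) (sq_nonneg σ)
  rcases Nat.eq_zero_or_pos n with hn | hn
  · exfalso
    subst hn
    have h1 := hσ (ind (⟨0, hp⟩ : Fin p))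
    rw [sum_ind_sq, mul_one] at h1
    have h2 : (∑ r : Fin 0, (A.mulVec (ind (⟨0, hp⟩ : Fin p))) r ^ 2) = 0 := by simp
    rw [h2] at h1
    nlinarith [hσpos]
  -- main case : p > 0, n > 0
  obtain ⟨i0, hi0⟩ := hcover ⟨0, hn⟩
  have hm : 0 < m := i0.pos
  have hmR : (0:ℝ) < (m : ℝ) := by exact_mod_cast hm
  have hβpos : 0 < β := lt_of_lt_of_le hα (hβα i0 ⟨_, hi0⟩)
  set Etot := ∑ r, (A.mulVec xstar r - b r) ^ 2 with hEt
  have hEnn : (0:ℝ) ≤ Etot := by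
    rw [hEt]; exact Finset.sum_nonneg fun _ _ => sq_nonneg _
  -- dot-product versions of the paving hypotheses
  have hup' : ∀ i (y : (τ i) → ℝ),
      ((A.submatrix (fun r : τ i => (r : Fin n)) id)ᵀ *ᵥ y) ⬝ᵥ
        ((A.submatrix (fun r : τ i => (r : Fin n)) id)ᵀ *ᵥ y) ≤ β * (y ⬝ᵥ y) := by
    intro i y
    have h := hpav_upper i y
    rwa [nsq_eq_dot, nsq_eq_dot] at h
  have hlow' : ∀ i (y : (τ i) → ℝ),
      α * (y ⬝ᵥ y) ≤ ((A.submatrix (fun r : τ i => (r : Fin n)) id)ᵀ *ᵥ y) ⬝ᵥ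
        ((A.submatrix (fun r : τ i => (r : Fin n)) id)ᵀ *ᵥ y) := by
    intro i y
    have h := hpav_lower i y
    rwa [nsq_eq_dot, nsq_eq_dot] at h
  -- partition of the row sum
  have hpart : ∀ v : Fin n → ℝ, ∑ i, ∑ r : (τ i), v (r : Fin n) ^ 2 = ∑ r, v r ^ 2 := by
    intro v
    have huniv : (Finset.univ : Finset (Fin n)) = Finset.univ.biUnion τ := by
      ext r; simpa using hcover r
    rw [show (∑ r, v r ^ 2) = ∑ r ∈ Finset.univ.biUnion τ, v r ^ 2 from by rw [← huniv]]
    rw [Finset.sum_biUnion (fun a _ b _ hab => hdisj a b hab)]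
    exact Finset.sum_congr rfl fun i _ => Finset.sum_coe_sort (τ i) (fun r => v r ^ 2)
  have hsplit : ∀ v : Fin p → ℝ,
      ∑ r, (A.mulVec v) r ^ 2
        = ∑ i, ((A.submatrix (fun r : τ i => (r : Fin n)) id) *ᵥ v) ⬝ᵥ
            ((A.submatrix (fun r : τ i => (r : Fin n)) id) *ᵥ v) := by
    intro v
    rw [← hpart (A.mulVec v)]
    refine Finset.sum_congr rfl fun i _ => ?_
    rw [← nsq_eq_dot]
    exact Finset.sum_congr rfl fun r _ => rfl
  -- σ² ≤ β m
  have hσβm : σ ^ 2 ≤ β * (m : ℝ) := by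
    have h1 := hσ (ind (⟨0, hp⟩ : Fin p))
    rw [sum_ind_sq, mul_one, hsplit] at h1
    have hd1 : (ind (⟨0, hp⟩ : Fin p)) ⬝ᵥ (ind (⟨0, hp⟩ : Fin p)) = 1 := by
      rw [← nsq_eq_dot, sum_ind_sq]
    have h2 : (∑ i, ((A.submatrix (fun r : τ i => (r : Fin n)) id) *ᵥ ind (⟨0, hp⟩ : Fin p)) ⬝ᵥ
          ((A.submatrix (fun r : τ i => (r : Fin n)) id) *ᵥ ind (⟨0, hp⟩ : Fin p)))
        ≤ ∑ _i : Fin m, β := by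
      refine Finset.sum_le_sum fun i _ => ?_
      have h3 := mulVec_bound_of_transpose _ β hβpos.le (hup' i) (ind (⟨0, hp⟩ : Fin p))
      rwa [hd1, mul_one] at h3
    rw [Finset.sum_const, Finset.card_univ, Fintype.card_fin, nsmul_eq_mul] at h2
    calc σ ^ 2 ≤ _ := h1
      _ ≤ (m : ℝ) * β := h2
      _ = β * (m : ℝ) := mul_comm _ _
  -- the one-step quantity
  set Φ : Fin m → (Fin p → ℝ) → ℝ := fun i d =>
    d ⬝ᵥ d
      - ((Ad i * A.submatrix (fun r : τ i => (r : Fin n)) id) *ᵥ d) ⬝ᵥ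
          ((Ad i * A.submatrix (fun r : τ i => (r : Fin n)) id) *ᵥ d)
      + (∑ r : (τ i), (A.mulVec xstar (r : Fin n) - b (r : Fin n)) ^ 2) / α with hΦ
  have hEi : (∑ i, ∑ r : (τ i), (A.mulVec xstar (r : Fin n) - b (r : Fin n)) ^ 2) = Etot := by
    rw [hEt]
    exact hpart (fun r => A.mulVec xstar r - b r)
  -- one-step bound, per trajectory
  have hrow : ∀ (K : ℕ) (ω : Fin (K + 1) → Fin m),
      ∑ t, (x (K + 1) ω t - xstar t) ^ 2
        ≤ Φ (ω (Fin.last K)) (fun t => x K (ω ∘ Fin.castSucc) t - xstar t) := by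
    intro K ω
    simp only [hΦ]
    obtain ⟨ha1, ha2, ha3, ha4⟩ := hAd (ω (Fin.last K))
    have hs := hstep K ω
    set B := A.submatrix (fun r : τ (ω (Fin.last K)) => (r : Fin n)) id with hB
    set D := Ad (ω (Fin.last K)) with hD
    set d : Fin p → ℝ := fun t => x K (ω ∘ Fin.castSucc) t - xstar t with hd
    set ei : (τ (ω (Fin.last K))) → ℝ :=
      fun r => A.mulVec xstar (r : Fin n) - b (r : Fin n) with hei
    have hPidem : (D * B) * (D * B) = D * B := by
      rw [Matrix.mul_assoc D B (D * B), ← Matrix.mul_assoc B D B, ha1]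
    have harg : (fun r : (τ (ω (Fin.last K))) =>
          b (r : Fin n) - A.mulVec (x K (ω ∘ Fin.castSucc)) (r : Fin n))
        = -(B *ᵥ d) - ei := by
      funext r
      have hBd : (B *ᵥ d) r
          = A.mulVec (x K (ω ∘ Fin.castSucc)) (r : Fin n) - A.mulVec xstar (r : Fin n) := by
        simp only [hB, hd, Matrix.mulVec, dotProduct, Matrix.submatrix_apply, id_eq,
          mul_sub]
        rw [Finset.sum_sub_distrib]
      simp only [Pi.sub_apply, Pi.neg_apply, hBd, hei]
      ring
    have hs2 : x (K + 1) ω = x K (ω ∘ Fin.castSucc) + (-((D * B) *ᵥ d) - D *ᵥ ei) := by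
      rw [hs, harg, mulVec_sub, mulVec_neg, mulVec_mulVec]
    calc ∑ t, (x (K + 1) ω t - xstar t) ^ 2
        = ∑ t, ((d - (D * B) *ᵥ d - D *ᵥ ei) t) ^ 2 := by
          refine Finset.sum_congr rfl fun t _ => ?_
          rw [hs2]
          simp only [Pi.add_apply, Pi.sub_apply, Pi.neg_apply, hd]
          ring
      _ = (d - (D * B) *ᵥ d - D *ᵥ ei) ⬝ᵥ (d - (D * B) *ᵥ d - D *ᵥ ei) := nsq_eq_dot _
      _ = (d - (D * B) *ᵥ d) ⬝ᵥ (d - (D * B) *ᵥ d) + (D *ᵥ ei) ⬝ᵥ (D *ᵥ ei) :=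
          step_pythagoras B D ha2 ha4 d ei
      _ = d ⬝ᵥ d - ((D * B) *ᵥ d) ⬝ᵥ ((D * B) *ᵥ d) + (D *ᵥ ei) ⬝ᵥ (D *ᵥ ei) := by
          rw [proj_decrease (D * B) ha4 hPidem d]
      _ ≤ d ⬝ᵥ d - ((D * B) *ᵥ d) ⬝ᵥ ((D * B) *ᵥ d) + (ei ⬝ᵥ ei) / α := by
          have hpb := pinv_bound B D ha1 ha2 ha3 ha4 α hα (hlow' (ω (Fin.last K))) ei
          have : (ei ⬝ᵥ ei) / α ≥ (D *ᵥ ei) ⬝ᵥ (D *ᵥ ei) := hpb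
          linarith
      _ = d ⬝ᵥ d - ((D * B) *ᵥ d) ⬝ᵥ ((D * B) *ᵥ d)
            + (∑ r : (τ (ω (Fin.last K))), (A.mulVec xstar (r : Fin n) - b (r : Fin n)) ^ 2) / α := by
          have hee : (ei ⬝ᵥ ei)
              = ∑ r : (τ (ω (Fin.last K))), (A.mulVec xstar (r : Fin n) - b (r : Fin n)) ^ 2 := by
            rw [← nsq_eq_dot]
          rw [hee]
  -- summing Φ over the blocks
  have hΦsum : ∀ dv : Fin p → ℝ,
      ∑ i, Φ i dv ≤ ((m : ℝ) - σ ^ 2 / β) * (dv ⬝ᵥ dv) + Etot / α := by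
    intro dv
    have hPB : ∀ i : Fin m,
        ((A.submatrix (fun r : τ i => (r : Fin n)) id) *ᵥ dv) ⬝ᵥ
          ((A.submatrix (fun r : τ i => (r : Fin n)) id) *ᵥ dv)
        ≤ β * (((Ad i * A.submatrix (fun r : τ i => (r : Fin n)) id) *ᵥ dv) ⬝ᵥ
            ((Ad i * A.submatrix (fun r : τ i => (r : Fin n)) id) *ᵥ dv)) := by
      intro i
      obtain ⟨ha1, ha2, ha3, ha4⟩ := hAd i
      have hfix : (A.submatrix (fun r : τ i => (r : Fin n)) id) *ᵥ dv
          = (A.submatrix (fun r : τ i => (r : Fin n)) id) *ᵥ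
              ((Ad i * A.submatrix (fun r : τ i => (r : Fin n)) id) *ᵥ dv) := by
        rw [mulVec_mulVec, ← Matrix.mul_assoc, ha1]
      rw [hfix]
      exact mulVec_bound_of_transpose _ β hβpos.le (hup' i) _
    have h1 := hσ dv
    rw [hsplit dv, nsq_eq_dot] at h1
    have h2 : σ ^ 2 * (dv ⬝ᵥ dv)
        ≤ β * ∑ i, ((Ad i * A.submatrix (fun r : τ i => (r : Fin n)) id) *ᵥ dv) ⬝ᵥ
            ((Ad i * A.submatrix (fun r : τ i => (r : Fin n)) id) *ᵥ dv) := by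
      calc σ ^ 2 * (dv ⬝ᵥ dv) ≤ _ := h1
        _ ≤ ∑ i, β * (((Ad i * A.submatrix (fun r : τ i => (r : Fin n)) id) *ᵥ dv) ⬝ᵥ
              ((Ad i * A.submatrix (fun r : τ i => (r : Fin n)) id) *ᵥ dv)) :=
            Finset.sum_le_sum fun i _ => hPB i
        _ = _ := by rw [← Finset.mul_sum]
    have h3 : σ ^ 2 / β * (dv ⬝ᵥ dv)
        ≤ ∑ i, ((Ad i * A.submatrix (fun r : τ i => (r : Fin n)) id) *ᵥ dv) ⬝ᵥ
            ((Ad i * A.submatrix (fun r : τ i => (r : Fin n)) id) *ᵥ dv) := by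
      rw [div_mul_eq_mul_div, div_le_iff₀ hβpos]
      calc σ ^ 2 * (dv ⬝ᵥ dv) ≤ _ := h2
        _ = _ * β := mul_comm _ _
    simp only [hΦ]
    rw [Finset.sum_add_distrib, Finset.sum_sub_distrib, ← Finset.sum_div, hEi,
      Finset.sum_const, Finset.card_univ, Fintype.card_fin, nsmul_eq_mul]
    have hexp : ((m : ℝ) - σ ^ 2 / β) * (dv ⬝ᵥ dv)
        = (m : ℝ) * (dv ⬝ᵥ dv) - σ ^ 2 / β * (dv ⬝ᵥ dv) := by ring
    rw [hexp]
    linarith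
  -- one-step recursion for the summed error
  have Srec : ∀ K : ℕ,
      (∑ ω : Fin (K + 1) → Fin m, ∑ t, (x (K + 1) ω t - xstar t) ^ 2)
        ≤ ((m : ℝ) - σ ^ 2 / β) * (∑ ω' : Fin K → Fin m, ∑ t, (x K ω' t - xstar t) ^ 2)
          + (m : ℝ) ^ K * (Etot / α) := by
    intro K
    have h1 : (∑ ω : Fin (K + 1) → Fin m, ∑ t, (x (K + 1) ω t - xstar t) ^ 2)
        ≤ ∑ ω : Fin (K + 1) → Fin m,
            Φ (ω (Fin.last K)) (fun t => x K (ω ∘ Fin.castSucc) t - xstar t) :=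
      Finset.sum_le_sum fun ω _ => hrow K ω
    have h2 : (∑ ω : Fin (K + 1) → Fin m,
          Φ (ω (Fin.last K)) (fun t => x K (ω ∘ Fin.castSucc) t - xstar t))
        = ∑ ω' : Fin K → Fin m, ∑ i, Φ i (fun t => x K ω' t - xstar t) := by
      rw [sum_snoc (fun ω => Φ (ω (Fin.last K)) (fun t => x K (ω ∘ Fin.castSucc) t - xstar t))]
      refine Finset.sum_congr rfl fun ω' _ => Finset.sum_congr rfl fun i _ => ?_
      have hc : (Fin.snoc ω' i : Fin (K + 1) → Fin m) ∘ Fin.castSucc = ω' :=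
        funext fun r => Fin.snoc_castSucc _ _ _
      simp only [Fin.snoc_last, hc]
    have hcard : Fintype.card (Fin K → Fin m) = m ^ K := by
      simp [Fintype.card_fun]
    have h3 : (∑ ω' : Fin K → Fin m, ∑ i, Φ i (fun t => x K ω' t - xstar t))
        ≤ ∑ ω' : Fin K → Fin m,
            (((m : ℝ) - σ ^ 2 / β) *
              ((fun t => x K ω' t - xstar t) ⬝ᵥ (fun t => x K ω' t - xstar t)) + Etot / α) :=
      Finset.sum_le_sum fun ω' _ => hΦsum _
    have hsum_eq : (∑ ω' : Fin K → Fin m,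
          ((fun t => x K ω' t - xstar t) ⬝ᵥ (fun t => x K ω' t - xstar t)))
        = ∑ ω' : Fin K → Fin m, ∑ t, (x K ω' t - xstar t) ^ 2 :=
      Finset.sum_congr rfl fun ω' _ => (nsq_eq_dot _).symm
    have h4 : (∑ ω' : Fin K → Fin m,
          (((m : ℝ) - σ ^ 2 / β) *
            ((fun t => x K ω' t - xstar t) ⬝ᵥ (fun t => x K ω' t - xstar t)) + Etot / α))
        = ((m : ℝ) - σ ^ 2 / β) * (∑ ω' : Fin K → Fin m, ∑ t, (x K ω' t - xstar t) ^ 2)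
          + (m : ℝ) ^ K * (Etot / α) := by
      rw [Finset.sum_add_distrib, ← Finset.mul_sum, hsum_eq, Finset.sum_const,
        Finset.card_univ, hcard, nsmul_eq_mul, Nat.cast_pow]
    calc (∑ ω : Fin (K + 1) → Fin m, ∑ t, (x (K + 1) ω t - xstar t) ^ 2)
        ≤ _ := h1
      _ = _ := h2
      _ ≤ _ := h3
      _ = _ := h4
  -- the inductive bound
  have hσ2pos : (0:ℝ) < σ ^ 2 := by positivity
  have hbm : (0:ℝ) < β * (m : ℝ) := mul_pos hβpos hmR
  have hρ0 : (0:ℝ) ≤ 1 - σ ^ 2 / (β * (m : ℝ)) := by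
    rw [sub_nonneg, div_le_one hbm]
    exact hσβm
  set Cc := β / α * Etot / σ ^ 2 with hCc
  have hCnn : (0:ℝ) ≤ Cc := by
    rw [hCc]
    exact div_nonneg (mul_nonneg (div_nonneg hβpos.le hα.le) hEnn) (sq_nonneg σ)
  have main : ∀ K : ℕ,
      ((1 : ℝ) / (m : ℝ) ^ K) * ∑ ω : Fin K → Fin m, ∑ t, (x K ω t - xstar t) ^ 2 ≤
        (1 - σ ^ 2 / (β * (m : ℝ))) ^ K * (∑ t, (x0 t - xstar t) ^ 2) + Cc := by
    intro K
    induction K with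
    | zero =>
      have h0 : (∑ ω : Fin 0 → Fin m, ∑ t, (x 0 ω t - xstar t) ^ 2)
          = ∑ t, (x0 t - xstar t) ^ 2 := by
        rw [Finset.sum_congr rfl fun ω _ => by rw [hx0 ω]]
        have hcard1 : Fintype.card (Fin 0 → Fin m) = 1 := by
          simp [Fintype.card_fun]
        rw [Finset.sum_const, Finset.card_univ, hcard1, one_smul]
      rw [pow_zero, pow_zero, one_mul, h0]
      have h11 : (1:ℝ) / 1 = 1 := by norm_num
      rw [h11, one_mul]
      linarith
    | succ K ih =>
      have h1 := Srec K
      set SK := ∑ ω' : Fin K → Fin m, ∑ t, (x K ω' t - xstar t) ^ 2 with hSK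
      set SK1 := ∑ ω : Fin (K + 1) → Fin m, ∑ t, (x (K + 1) ω t - xstar t) ^ 2 with hSK1
      set T0 := ∑ t, (x0 t - xstar t) ^ 2 with hT0
      have hmK : (0:ℝ) < (m : ℝ) ^ K := by positivity
      have hmK1 : (0:ℝ) < (m : ℝ) ^ (K + 1) := by positivity
      have step1 : (1 / (m : ℝ) ^ (K + 1)) * SK1
          ≤ (1 / (m : ℝ) ^ (K + 1)) * (((m : ℝ) - σ ^ 2 / β) * SK + (m : ℝ) ^ K * (Etot / α)) :=
        mul_le_mul_of_nonneg_left h1 (by positivity)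
      have step2 : (1 / (m : ℝ) ^ (K + 1)) * (((m : ℝ) - σ ^ 2 / β) * SK + (m : ℝ) ^ K * (Etot / α))
          = (1 - σ ^ 2 / (β * (m : ℝ))) * ((1 / (m : ℝ) ^ K) * SK) + Etot / (α * (m : ℝ)) := by
        field_simp
        ring
      have step3 : (1 - σ ^ 2 / (β * (m : ℝ))) * ((1 / (m : ℝ) ^ K) * SK)
          ≤ (1 - σ ^ 2 / (β * (m : ℝ))) * ((1 - σ ^ 2 / (β * (m : ℝ))) ^ K * T0 + Cc) :=
        mul_le_mul_of_nonneg_left ih hρ0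
      have hCid : (1 - σ ^ 2 / (β * (m : ℝ))) * Cc + Etot / (α * (m : ℝ)) = Cc := by
        rw [hCc]
        field_simp
        ring
      have step4 : (1 - σ ^ 2 / (β * (m : ℝ))) * ((1 - σ ^ 2 / (β * (m : ℝ))) ^ K * T0 + Cc)
            + Etot / (α * (m : ℝ))
          = (1 - σ ^ 2 / (β * (m : ℝ))) ^ (K + 1) * T0 + Cc := by
        calc (1 - σ ^ 2 / (β * (m : ℝ))) * ((1 - σ ^ 2 / (β * (m : ℝ))) ^ K * T0 + Cc)
              + Etot / (α * (m : ℝ))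
            = (1 - σ ^ 2 / (β * (m : ℝ))) ^ (K + 1) * T0
              + ((1 - σ ^ 2 / (β * (m : ℝ))) * Cc + Etot / (α * (m : ℝ))) := by ring
          _ = _ := by rw [hCid]
      linarith
  exact main J
end

section
/- For a single step of randomized block Kaczmarz with an (m, α, β) row paving and uniformly random block τ: E[‖x_j - x_*‖₂²] ≤ (1 - σ_min²(A)/(mβ)) ‖x_{j-1} - x_*‖₂² + (1/(mα)) ‖e‖₂². -/
open Matrix

section
variable {k l : Type*} [Fintype k] [Fintype l]

lemma bk_dot_self_nonneg (v : k → ℝ) : 0 ≤ v ⬝ᵥ v :=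
  Finset.sum_nonneg fun _ _ => mul_self_nonneg _

lemma bk_cs (u v : k → ℝ) : (u ⬝ᵥ v) ^ 2 ≤ (u ⬝ᵥ u) * (v ⬝ᵥ v) := by
  have h := Finset.sum_mul_sq_le_sq_mul_sq Finset.univ u v
  simpa [dotProduct, pow_two] using h

lemma bk_dot_mulVec (M : Matrix k l ℝ) (x : k → ℝ) (y : l → ℝ) :
    x ⬝ᵥ M.mulVec y = Mᵀ.mulVec x ⬝ᵥ y := by
  rw [dotProduct_mulVec, mulVec_transpose]

lemma bk_dot_symm (M : Matrix k k ℝ) (h : Mᵀ = M) (x y : k → ℝ) :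
    x ⬝ᵥ M.mulVec y = M.mulVec x ⬝ᵥ y := by
  rw [bk_dot_mulVec, h]

lemma bk_proj_contract (P : Matrix k k ℝ) (hs : Pᵀ = P) (hi : P * P = P) (v : k → ℝ) :
    P.mulVec v ⬝ᵥ P.mulVec v ≤ v ⬝ᵥ v := by
  have h1 : P.mulVec v ⬝ᵥ P.mulVec v = v ⬝ᵥ P.mulVec v := by
    rw [← bk_dot_symm P hs v (P.mulVec v), mulVec_mulVec, hi]
  have h2 := bk_cs v (P.mulVec v)
  have h3 := bk_dot_self_nonneg (P.mulVec v)
  have h4 := bk_dot_self_nonneg v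
  nlinarith [sq_nonneg (P.mulVec v ⬝ᵥ P.mulVec v - v ⬝ᵥ v)]

lemma bk_upper (S : Matrix k l ℝ) (β : ℝ) (hβ : 0 ≤ β)
    (hup : ∀ y : k → ℝ, Sᵀ.mulVec y ⬝ᵥ Sᵀ.mulVec y ≤ β * (y ⬝ᵥ y)) (z : l → ℝ) :
    S.mulVec z ⬝ᵥ S.mulVec z ≤ β * (z ⬝ᵥ z) := by
  have h1 : S.mulVec z ⬝ᵥ S.mulVec z = Sᵀ.mulVec (S.mulVec z) ⬝ᵥ z := by
    conv_lhs => rw [dotProduct_comm]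
    exact bk_dot_mulVec S (S.mulVec z) z
  have h2 := bk_cs (Sᵀ.mulVec (S.mulVec z)) z
  have h3 := hup (S.mulVec z)
  have h4 := bk_dot_self_nonneg (S.mulVec z)
  have h5 := bk_dot_self_nonneg z
  have h6 := bk_dot_self_nonneg (Sᵀ.mulVec (S.mulVec z))
  nlinarith [mul_nonneg hβ h5, mul_nonneg h4 h5,
    sq_nonneg (S.mulVec z ⬝ᵥ S.mulVec z - β * (z ⬝ᵥ z))]

lemma bk_pinv_bound (S : Matrix k l ℝ) (D : Matrix l k ℝ)
    (h1 : S * D * S = S) (h2 : D * S * D = D) (h3 : (S * D)ᵀ = S * D) (h4 : (D * S)ᵀ = D * S)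
    (α : ℝ) (hα : 0 < α)
    (hlow : ∀ y : k → ℝ, α * (y ⬝ᵥ y) ≤ Sᵀ.mulVec y ⬝ᵥ Sᵀ.mulVec y)
    (y : k → ℝ) :
    α * (D.mulVec y ⬝ᵥ D.mulVec y) ≤ y ⬝ᵥ y := by
  have hm : (Sᵀ * Dᵀ) * D = D := by
    rw [← transpose_mul, h4]; exact h2
  have hw : D.mulVec y = Sᵀ.mulVec (Dᵀ.mulVec (D.mulVec y)) := by
    rw [mulVec_mulVec, mulVec_mulVec, hm]
  have hPP : (S * D) * (S * D) = S * D := by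
    rw [← Matrix.mul_assoc, h1]
  set w := D.mulVec y with hwdef
  set v := Dᵀ.mulVec w with hvdef
  have hww : w ⬝ᵥ w = (S * D).mulVec v ⬝ᵥ y := by
    calc w ⬝ᵥ w = Sᵀ.mulVec v ⬝ᵥ w := by rw [← hw]
      _ = v ⬝ᵥ S.mulVec w := (bk_dot_mulVec S v w).symm
      _ = v ⬝ᵥ (S * D).mulVec y := by rw [hwdef, mulVec_mulVec]
      _ = (S * D).mulVec v ⬝ᵥ y := bk_dot_symm _ h3 _ _
  have hpc := bk_proj_contract (S * D) h3 hPP v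
  have hv : α * (v ⬝ᵥ v) ≤ w ⬝ᵥ w := by
    have := hlow v; rw [← hw] at this; exact this
  have hcs := bk_cs ((S * D).mulVec v) y
  have n1 := bk_dot_self_nonneg w
  have n2 := bk_dot_self_nonneg y
  have k0 : (w ⬝ᵥ w) ^ 2 ≤ (v ⬝ᵥ v) * (y ⬝ᵥ y) := by
    calc (w ⬝ᵥ w) ^ 2 = ((S * D).mulVec v ⬝ᵥ y) ^ 2 := by rw [hww]
      _ ≤ ((S * D).mulVec v ⬝ᵥ (S * D).mulVec v) * (y ⬝ᵥ y) := hcs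
      _ ≤ (v ⬝ᵥ v) * (y ⬝ᵥ y) := mul_le_mul_of_nonneg_right hpc n2
  have k2 : α * (w ⬝ᵥ w) ^ 2 ≤ (w ⬝ᵥ w) * (y ⬝ᵥ y) := by
    calc α * (w ⬝ᵥ w) ^ 2 ≤ α * ((v ⬝ᵥ v) * (y ⬝ᵥ y)) := mul_le_mul_of_nonneg_left k0 hα.le
      _ = (α * (v ⬝ᵥ v)) * (y ⬝ᵥ y) := by ring
      _ ≤ (w ⬝ᵥ w) * (y ⬝ᵥ y) := mul_le_mul_of_nonneg_right hv n2
  nlinarith [sq_nonneg (α * (w ⬝ᵥ w) - (y ⬝ᵥ y))]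

/-- The per-block inequality. -/
lemma bk_block (S : Matrix k l ℝ) (D : Matrix l k ℝ)
    (h1 : S * D * S = S) (h2 : D * S * D = D) (h3 : (S * D)ᵀ = S * D) (h4 : (D * S)ᵀ = D * S)
    (α β : ℝ) (hα : 0 < α) (hβ : 0 < β)
    (hlow : ∀ y : k → ℝ, α * (y ⬝ᵥ y) ≤ Sᵀ.mulVec y ⬝ᵥ Sᵀ.mulVec y)
    (hup : ∀ y : k → ℝ, Sᵀ.mulVec y ⬝ᵥ Sᵀ.mulVec y ≤ β * (y ⬝ᵥ y))
    (u : l → ℝ) (e : k → ℝ) :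
    (u - D.mulVec (S.mulVec u) - D.mulVec e) ⬝ᵥ (u - D.mulVec (S.mulVec u) - D.mulVec e)
      ≤ u ⬝ᵥ u - (1/β) * (S.mulVec u ⬝ᵥ S.mulVec u) + (1/α) * (e ⬝ᵥ e) := by
  have hMM : (D * S) * (D * S) = D * S := by
    rw [← Matrix.mul_assoc, h2]
  set q := D.mulVec (S.mulVec u) with hq
  set w := D.mulVec e with hwdef
  have hqM : q = (D * S).mulVec u := by rw [hq, mulVec_mulVec]
  have hwM : w = (D * S).mulVec w := by
    rw [hwdef, mulVec_mulVec, h2]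
  have hMq : (D * S).mulVec q = q := by
    rw [hqM, mulVec_mulVec, hMM, ← hqM]
  have hqq : u ⬝ᵥ q = q ⬝ᵥ q := by
    have h := bk_dot_symm (D * S) h4 u q
    rw [hMq, ← hqM] at h
    exact h
  have horth : u ⬝ᵥ w = q ⬝ᵥ w := by
    have h := bk_dot_symm (D * S) h4 u w
    rw [hwM.symm, ← hqM] at h
    exact h
  have hexp : (u - q - w) ⬝ᵥ (u - q - w) = u ⬝ᵥ u - q ⬝ᵥ q + w ⬝ᵥ w := by
    simp only [sub_dotProduct, dotProduct_sub]
    have c1 := dotProduct_comm u q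
    have c2 := dotProduct_comm u w
    have c3 := dotProduct_comm q w
    linarith [hqq, horth, c1, c2, c3]
  rw [hexp]
  have hwb : w ⬝ᵥ w ≤ (1/α) * (e ⬝ᵥ e) := by
    have := bk_pinv_bound S D h1 h2 h3 h4 α hα hlow e
    rw [← hwdef] at this
    calc w ⬝ᵥ w = (1/α) * (α * (w ⬝ᵥ w)) := by field_simp
      _ ≤ (1/α) * (e ⬝ᵥ e) := mul_le_mul_of_nonneg_left this (by positivity)
  have hSq : S.mulVec u = S.mulVec q := by
    rw [hqM, mulVec_mulVec, ← Matrix.mul_assoc, h1]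
  have hqb : (1/β) * (S.mulVec u ⬝ᵥ S.mulVec u) ≤ q ⬝ᵥ q := by
    have hb := bk_upper S β hβ.le hup q
    rw [← hSq] at hb
    calc (1/β) * (S.mulVec u ⬝ᵥ S.mulVec u) ≤ (1/β) * (β * (q ⬝ᵥ q)) :=
          mul_le_mul_of_nonneg_left hb (by positivity)
      _ = q ⬝ᵥ q := by field_simp
  linarith

end

lemma bk_sum_sq {k : Type*} [Fintype k] (v : k → ℝ) : ∑ x, v x ^ 2 = v ⬝ᵥ v := by
  simp [dotProduct, pow_two]

lemma bk_partition {n m : ℕ} (τ : Fin m → Finset (Fin n))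
    (hdisj : ∀ i j, i ≠ j → Disjoint (τ i) (τ j))
    (hcover : ∀ r : Fin n, ∃ i, r ∈ τ i) (f : Fin n → ℝ) :
    ∑ i, ∑ r : (τ i : Finset (Fin n)), f (r : Fin n) = ∑ r, f r := by
  classical
  have h1 : ∀ i, ∑ r : (τ i : Finset (Fin n)), f (r : Fin n) = ∑ r ∈ τ i, f r :=
    fun i => Finset.sum_coe_sort (τ i) f
  have hbu : Finset.univ.biUnion τ = Finset.univ := by
    ext r
    simp only [Finset.mem_biUnion, Finset.mem_univ, true_and, iff_true]
    exact hcover r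
  calc ∑ i, ∑ r : (τ i : Finset (Fin n)), f (r : Fin n)
      = ∑ i, ∑ r ∈ τ i, f r := by simp_rw [h1]
    _ = ∑ r ∈ Finset.univ.biUnion τ, f r := by
        rw [Finset.sum_biUnion]
        intro i _ j _ hij
        exact hdisj i j hij
    _ = ∑ r, f r := by rw [hbu]

/-- one step of randomized block Kaczmarz with an `(m, α, β)` row paving
`T = {τ_1, ..., τ_m}` and uniformly random block:
`E‖x_j - x_*‖² ≤ (1 - σ_min²(A)/(mβ)) ‖x_{j-1} - x_*‖² + (1/(mα)) ‖e‖²`,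
where `e = A x_* - b` and the expectation is the average over the `m` blocks.
The paving conditions `α ≤ λ_min(A_τ A_τᵀ)` and `λ_max(A_τ A_τᵀ) ≤ β` are expressed by
`α ‖y‖² ≤ ‖A_τᵀ y‖² ≤ β ‖y‖²`, and `σ ≤ σ_min(A)` by `σ² ‖u‖² ≤ ‖A u‖²`. -/
theorem block_kaczmarz_one_step_expected_error {n p m : ℕ}
    (A : Matrix (Fin n) (Fin p) ℝ) (b : Fin n → ℝ)
    (τ : Fin m → Finset (Fin n))
    (hdisj : ∀ i j, i ≠ j → Disjoint (τ i) (τ j))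
    (hcover : ∀ r : Fin n, ∃ i, r ∈ τ i)
    (Ad : ∀ i, Matrix (Fin p) (τ i) ℝ)
    (hAd : ∀ i, IsMoorePenrose (A.submatrix (fun r : τ i => (r : Fin n)) id) (Ad i))
    (α β : ℝ) (hα : 0 < α)
    (hpav_lower : ∀ i, ∀ y : τ i → ℝ,
      α * ∑ r, y r ^ 2 ≤
        ∑ j, ((A.submatrix (fun r : τ i => (r : Fin n)) id)ᵀ.mulVec y) j ^ 2)
    (hpav_upper : ∀ i, ∀ y : τ i → ℝ,
      ∑ j, ((A.submatrix (fun r : τ i => (r : Fin n)) id)ᵀ.mulVec y) j ^ 2 ≤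
        β * ∑ r, y r ^ 2)
    (σ : ℝ) (hσpos : 0 < σ)
    (hσ : ∀ u : Fin p → ℝ, σ ^ 2 * ∑ j, u j ^ 2 ≤ ∑ r, (A.mulVec u) r ^ 2)
    (xstar : Fin p → ℝ)
    (hstar : ∀ z : Fin p → ℝ,
      ∑ r, (A.mulVec xstar r - b r) ^ 2 ≤ ∑ r, (A.mulVec z r - b r) ^ 2)
    (xprev : Fin p → ℝ) (xj : Fin m → Fin p → ℝ)
    (hupd : ∀ i, xj i =
      xprev + (Ad i).mulVec (fun r => b (r : Fin n) - A.mulVec xprev (r : Fin n))) :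
    ((1 : ℝ) / m) * ∑ i, ∑ t, (xj i t - xstar t) ^ 2 ≤
      (1 - σ ^ 2 / (m * β)) * ∑ t, (xprev t - xstar t) ^ 2 +
        (1 / (m * α)) * ∑ r, (A.mulVec xstar r - b r) ^ 2 := by
  classical
  rcases Nat.eq_zero_or_pos m with hm | hm
  · subst hm
    simp only [Finset.univ_eq_empty, Finset.sum_empty, mul_zero, Nat.cast_zero, zero_mul,
      div_zero, sub_zero, one_mul]
    positivity
  rcases Nat.eq_zero_or_pos p with hp | hp
  · subst hp
    simp only [Finset.univ_eq_empty, Finset.sum_empty, mul_zero, Finset.sum_const_zero,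
      add_zero, zero_add]
    positivity
  have hm' : (0:ℝ) < m := by exact_mod_cast hm
  -- β must be positive
  have hβ : 0 < β := by
    by_contra hβ'
    push_neg at hβ'
    have hArow : ∀ r j0, A r j0 = 0 := by
      intro r j0
      obtain ⟨i, hri⟩ := hcover r
      have hy := hpav_upper i
        ((Pi.single (⟨r, hri⟩ : {x // x ∈ τ i}) (1:ℝ) : {x // x ∈ τ i} → ℝ))
      have hy1 : ∑ s : (τ i : Finset (Fin n)),
          ((Pi.single (⟨r, hri⟩ : {x // x ∈ τ i}) (1:ℝ) : {x // x ∈ τ i} → ℝ)) s ^ 2 = 1 := by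
        rw [Finset.sum_eq_single (⟨r, hri⟩ : {x // x ∈ τ i})]
        · simp
        · intro s _ hs; simp [Pi.single_apply, hs]
        · intro h; exact absurd (Finset.mem_univ _) h
      rw [hy1, mul_one] at hy
      have hterm : ((A.submatrix (fun r : τ i => (r : Fin n)) id)ᵀ.mulVec
          ((Pi.single (⟨r, hri⟩ : {x // x ∈ τ i}) (1:ℝ) : {x // x ∈ τ i} → ℝ))) j0 = A r j0 := by
        simp only [Matrix.mulVec, dotProduct, Matrix.transpose_apply, Matrix.submatrix_apply, id]
        rw [Finset.sum_eq_single (⟨r, hri⟩ : {x // x ∈ τ i})]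
        · simp
        · intro s _ hs; simp [Pi.single_apply, hs]
        · intro h; exact absurd (Finset.mem_univ _) h
      have hle : (A r j0) ^ 2 ≤ 0 := by
        have hsingle := Finset.single_le_sum
          (f := fun j => ((A.submatrix (fun r : τ i => (r : Fin n)) id)ᵀ.mulVec
            ((Pi.single (⟨r, hri⟩ : {x // x ∈ τ i}) (1:ℝ) : {x // x ∈ τ i} → ℝ))) j ^ 2)
          (fun _ _ => sq_nonneg _) (Finset.mem_univ j0)
        simp only [hterm] at hsingle
        linarith [le_trans hy hβ']
      nlinarith [sq_nonneg (A r j0)]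
    have h1 := hσ (fun _ => 1)
    have h2 : ∑ r, (A.mulVec (fun _ => (1:ℝ))) r ^ 2 = 0 := by
      apply Finset.sum_eq_zero
      intro r _
      have : A.mulVec (fun _ => (1:ℝ)) r = 0 := by
        simp [Matrix.mulVec, dotProduct, hArow r]
      rw [this]; norm_num
    rw [h2] at h1
    have h3 : ∑ j : Fin p, (1:ℝ) ^ 2 = p := by simp
    rw [h3] at h1
    have hp' : (0:ℝ) < p := by exact_mod_cast hp
    have : (0:ℝ) < σ ^ 2 * p := mul_pos (pow_pos hσpos 2) hp'
    linarith
  -- main case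
  simp only [bk_sum_sq]
  set u : Fin p → ℝ := fun t => xprev t - xstar t with hu
  set ev : Fin n → ℝ := fun r => A.mulVec xstar r - b r with hev
  have hkey : ∀ i, (fun t => xj i t - xstar t) ⬝ᵥ (fun t => xj i t - xstar t) ≤
      u ⬝ᵥ u
        - (1/β) * ((fun r : {x // x ∈ τ i} => A.mulVec u (r : Fin n)) ⬝ᵥ
            (fun r : {x // x ∈ τ i} => A.mulVec u (r : Fin n)))
        + (1/α) * ((fun r : {x // x ∈ τ i} => ev (r : Fin n)) ⬝ᵥ
            (fun r : {x // x ∈ τ i} => ev (r : Fin n))) := by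
    intro i
    obtain ⟨p1, p2, p3, p4⟩ := hAd i
    have hlow' : ∀ y : {x // x ∈ τ i} → ℝ, α * (y ⬝ᵥ y) ≤
        (A.submatrix (fun r : τ i => (r : Fin n)) id)ᵀ.mulVec y ⬝ᵥ
          (A.submatrix (fun r : τ i => (r : Fin n)) id)ᵀ.mulVec y := by
      intro y
      have h := hpav_lower i y
      simpa only [bk_sum_sq] using h
    have hup' : ∀ y : {x // x ∈ τ i} → ℝ,
        (A.submatrix (fun r : τ i => (r : Fin n)) id)ᵀ.mulVec y ⬝ᵥ
          (A.submatrix (fun r : τ i => (r : Fin n)) id)ᵀ.mulVec y ≤ β * (y ⬝ᵥ y) := by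
      intro y
      have h := hpav_upper i y
      simpa only [bk_sum_sq] using h
    have hsv : (A.submatrix (fun r : τ i => (r : Fin n)) id).mulVec u
        = (fun r : {x // x ∈ τ i} => A.mulVec u (r : Fin n)) := by
      funext r
      simp [Matrix.mulVec, dotProduct, Matrix.submatrix_apply]
    have hdvec : (fun t => xj i t - xstar t)
        = (u - (Ad i).mulVec ((A.submatrix (fun r : τ i => (r : Fin n)) id).mulVec u)
            - (Ad i).mulVec (fun r : {x // x ∈ τ i} => ev (r : Fin n))) := by
      have harg : (fun r : τ i => b (r : Fin n) - A.mulVec xprev (r : Fin n))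
          = (- (A.submatrix (fun r : τ i => (r : Fin n)) id).mulVec u
              - (fun r : {x // x ∈ τ i} => ev (r : Fin n))) := by
        funext r
        simp only [Pi.sub_apply, Pi.neg_apply]
        have h1 : (A.submatrix (fun r : τ i => (r : Fin n)) id).mulVec u r
            = A.mulVec xprev (r : Fin n) - A.mulVec xstar (r : Fin n) := by
          simp only [Matrix.mulVec, dotProduct, Matrix.submatrix_apply, id_eq, hu]
          rw [← Finset.sum_sub_distrib]
          apply Finset.sum_congr rfl
          intros; ring
        rw [h1]
        simp only [hev]
        ring
      funext t
      rw [hupd i, harg]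
      rw [Matrix.mulVec_sub, Matrix.mulVec_neg]
      simp only [Pi.add_apply, Pi.sub_apply, Pi.neg_apply, hu]
      ring
    rw [hdvec, ← hsv]
    exact bk_block (A.submatrix (fun r : τ i => (r : Fin n)) id) (Ad i) p1 p2 p3 p4
      α β hα hβ hlow' hup' u (fun r : {x // x ∈ τ i} => ev (r : Fin n))
  have hsum := Finset.sum_le_sum (fun i (_ : i ∈ Finset.univ) => hkey i)
  have hG : ∑ i, ((fun r : {x // x ∈ τ i} => A.mulVec u (r : Fin n)) ⬝ᵥ
      (fun r : {x // x ∈ τ i} => A.mulVec u (r : Fin n)))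
      = (A.mulVec u) ⬝ᵥ (A.mulVec u) := by
    calc ∑ i, ((fun r : {x // x ∈ τ i} => A.mulVec u (r : Fin n)) ⬝ᵥ
          (fun r : {x // x ∈ τ i} => A.mulVec u (r : Fin n)))
        = ∑ i, ∑ r : (τ i : Finset (Fin n)), (A.mulVec u (r : Fin n)) ^ 2 := by
          apply Finset.sum_congr rfl
          intro i _
          exact (bk_sum_sq _).symm
      _ = ∑ r, (A.mulVec u r) ^ 2 := bk_partition τ hdisj hcover (fun r => (A.mulVec u r) ^ 2)
      _ = (A.mulVec u) ⬝ᵥ (A.mulVec u) := bk_sum_sq _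
  have hE : ∑ i, ((fun r : {x // x ∈ τ i} => ev (r : Fin n)) ⬝ᵥ
      (fun r : {x // x ∈ τ i} => ev (r : Fin n))) = ev ⬝ᵥ ev := by
    calc ∑ i, ((fun r : {x // x ∈ τ i} => ev (r : Fin n)) ⬝ᵥ
          (fun r : {x // x ∈ τ i} => ev (r : Fin n)))
        = ∑ i, ∑ r : (τ i : Finset (Fin n)), (ev (r : Fin n)) ^ 2 := by
          apply Finset.sum_congr rfl
          intro i _
          exact (bk_sum_sq _).symm
      _ = ∑ r, (ev r) ^ 2 := bk_partition τ hdisj hcover (fun r => (ev r) ^ 2)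
      _ = ev ⬝ᵥ ev := bk_sum_sq _
  have hAu : σ ^ 2 * (u ⬝ᵥ u) ≤ A.mulVec u ⬝ᵥ A.mulVec u := by
    have h := hσ u
    simpa only [bk_sum_sq] using h
  have hsplit : ∑ i : Fin m, (u ⬝ᵥ u
        - (1/β) * ((fun r : {x // x ∈ τ i} => A.mulVec u (r : Fin n)) ⬝ᵥ
            (fun r : {x // x ∈ τ i} => A.mulVec u (r : Fin n)))
        + (1/α) * ((fun r : {x // x ∈ τ i} => ev (r : Fin n)) ⬝ᵥ
            (fun r : {x // x ∈ τ i} => ev (r : Fin n))))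
      = (m : ℝ) * (u ⬝ᵥ u) - (1/β) * (A.mulVec u ⬝ᵥ A.mulVec u) + (1/α) * (ev ⬝ᵥ ev) := by
    rw [Finset.sum_add_distrib, Finset.sum_sub_distrib, ← Finset.mul_sum, ← Finset.mul_sum,
      hG, hE, Finset.sum_const, Finset.card_univ, Fintype.card_fin, nsmul_eq_mul]
  have main : ∑ i, ((fun t => xj i t - xstar t) ⬝ᵥ (fun t => xj i t - xstar t))
      ≤ (m : ℝ) * (u ⬝ᵥ u) - (1/β) * (σ ^ 2 * (u ⬝ᵥ u)) + (1/α) * (ev ⬝ᵥ ev) := by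
    have h2 : (1/β) * (σ ^ 2 * (u ⬝ᵥ u)) ≤ (1/β) * (A.mulVec u ⬝ᵥ A.mulVec u) :=
      mul_le_mul_of_nonneg_left hAu (by positivity)
    calc ∑ i, ((fun t => xj i t - xstar t) ⬝ᵥ (fun t => xj i t - xstar t)) ≤ _ := hsum
      _ = (m : ℝ) * (u ⬝ᵥ u) - (1/β) * (A.mulVec u ⬝ᵥ A.mulVec u) + (1/α) * (ev ⬝ᵥ ev) := hsplit
      _ ≤ (m : ℝ) * (u ⬝ᵥ u) - (1/β) * (σ ^ 2 * (u ⬝ᵥ u)) + (1/α) * (ev ⬝ᵥ ev) := by linarith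
  have hm0 : (m : ℝ) ≠ 0 := ne_of_gt hm'
  have hβ0 : β ≠ 0 := ne_of_gt hβ
  have hα0 : α ≠ 0 := ne_of_gt hα
  calc ((1 : ℝ) / m) * ∑ i, ((fun t => xj i t - xstar t) ⬝ᵥ (fun t => xj i t - xstar t))
      ≤ ((1 : ℝ) / m) * ((m : ℝ) * (u ⬝ᵥ u) - (1/β) * (σ ^ 2 * (u ⬝ᵥ u)) + (1/α) * (ev ⬝ᵥ ev)) :=
        mul_le_mul_of_nonneg_left main (by positivity)
    _ = (1 - σ ^ 2 / (m * β)) * (u ⬝ᵥ u) + (1 / (m * α)) * (ev ⬝ᵥ ev) := by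
        field_simp
end
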